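/- arXiv:1204.3275 — 3 statements merged into one kernel-verified Lean document; each statement's English description precedes it below -/
import Mathlib

section
/- Let (Ω,𝔉_T,P) be a probability space. Let X be a separable Banach space and Y a reflexive Banach space, and assume that the scalar space L^p(Ω,𝔉_T,P) is separable for one (equivalently, every) p ∈ [1,∞). Let 1 ≤ p₁ < ∞ and 1 < q₁ < ∞. Then the set ℒ_pd(L^{p₁}(Ω,𝔉_T,P;X), L^{q₁}(Ω,𝔉_T,P;Y)) of all pointwisely defined bounded linear operators from L^{p₁}(Ω,𝔉_T,P;X) to L^{q₁}(Ω,𝔉_T,P;Y) is a closed linear subspace of the Banach space ℒ(L^{p₁}(Ω,𝔉_T,P;X), L^{q₁}(Ω,𝔉_T,P;Y)) of all bounded linear operators, equipped with the operator norm. In particular, if a sequence of pointwisely defined bounded linear operators converges in operator norm to a bounded linear operator 𝒢, then 𝒢 is pointwisely defined. -/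
open MeasureTheory Filter Topology
open scoped ENNReal

noncomputable section

/-- A bounded linear operator `𝒢 : L^{p₁}(Ω;X) → L^{q₁}(Ω;Y)` is *pointwisely defined*
if there is a family of operators `G ω ∈ ℒ(X,Y)` such that `(𝒢 u)(ω) = G ω (u ω)`
for a.e. `ω` and every `u`. -/
def PointwiselyDefined {Ω : Type*} [MeasurableSpace Ω] (P : Measure Ω)
    {X Y : Type*} [NormedAddCommGroup X] [NormedSpace ℝ X]
    [NormedAddCommGroup Y] [NormedSpace ℝ Y]
    (p₁ q₁ : ℝ≥0∞) [Fact (1 ≤ p₁)] [Fact (1 ≤ q₁)]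
    (𝒢 : Lp X p₁ P →L[ℝ] Lp Y q₁ P) : Prop :=
  ∃ G : Ω → X →L[ℝ] Y, ∀ u : Lp X p₁ P, ∀ᵐ ω ∂P, (𝒢 u) ω = G ω (u ω)

/-!
Separability of `X` gives a sequence `wᵢ` in its unit ball with `‖T‖ = supᵢ ‖T wᵢ‖` for every
`T ∈ ℒ(X, Y)`. If `𝒢` is given pointwise by `G`, then `‖G ω‖ > ε` means `‖(𝒢 wᵢ)(ω)‖ > ε` for some `i`, and testing `𝒢` on the function that equals the
first such `wᵢ` gives the Chebyshev bound `ε^q P(‖G‖ > ε) ≤ ‖𝒢‖^q`. For `𝒢ₙ → 𝒢`, pass to a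
subsequence with `‖𝒢ₙₖ₊₁ - 𝒢ₙₖ‖ ≤ 4⁻ᵏ`: applied to the differences, the bound and Borel–Cantelli
show that `Gₙₖ(ω)` is Cauchy in `ℒ(X, Y)` for a.e. `ω`. Its limit `G ω` represents `𝒢`, since
`𝒢ₙₖ u → 𝒢 u` in `L^q` and hence a.e. along a further subsequence.
-/

theorem exists_seq_norm_le_one_opNorm_le {X Y : Type*} [NormedAddCommGroup X] [NormedSpace ℝ X]
    [TopologicalSpace.SeparableSpace X] [NormedAddCommGroup Y] [NormedSpace ℝ Y] :
    ∃ w : ℕ → X, (∀ i, ‖w i‖ ≤ 1) ∧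
      ∀ (T : X →L[ℝ] Y) {ε : ℝ}, 0 ≤ ε → (∀ i, ‖T (w i)‖ ≤ ε) → ‖T‖ ≤ ε := by
  obtain ⟨x, hx⟩ := TopologicalSpace.exists_dense_seq X
  refine ⟨fun i => ‖x i‖⁻¹ • x i, fun i => ?_, fun T ε hε hT => T.opNorm_le_bound hε fun y => ?_⟩
  · rw [norm_smul, norm_inv, norm_norm]
    exact inv_mul_le_one_of_le₀ le_rfl (norm_nonneg _)
  refine hx.induction_on y (isClosed_le T.continuous.norm (continuous_norm.const_mul ε))
    fun i => ?_
  obtain hxi | hxi := eq_or_ne (x i) 0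
  · simp [hxi]
  have := hT i
  rw [map_smul, norm_smul, norm_inv, norm_norm, inv_mul_le_iff₀ (norm_pos_iff.2 hxi)] at this
  linarith [mul_comm ε ‖x i‖]

theorem ae_cauchySeq_of_dist_le_of_tsum_ne_top {α E : Type*} [MeasurableSpace α] {μ : Measure α}
    [PseudoMetricSpace E] {F : ℕ → α → E} {A : ℕ → Set α} {r : ℕ → ℝ}
    (hA : ∑' k, μ (A k) ≠ ⊤) (hr : Summable r)
    (hF : ∀ k, ∀ᵐ x ∂μ, x ∉ A k → dist (F k x) (F (k + 1) x) ≤ r k) :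
    ∀ᵐ x ∂μ, CauchySeq fun k => F k x := by
  filter_upwards [ae_eventually_notMem hA, ae_all_iff.2 hF] with x hx hF
  refine cauchySeq_of_summable_dist (hr.of_norm_bounded_eventually_nat ?_)
  filter_upwards [hx] with k hk
  rw [Real.norm_of_nonneg dist_nonneg]
  exact hF k hk

theorem Lp.norm_le_of_ae_bound_of_isProbabilityMeasure {α E : Type*} [MeasurableSpace α]
    {μ : Measure α} [IsProbabilityMeasure μ] [NormedAddCommGroup E] {p : ℝ≥0∞} {f : Lp E p μ}
    {C : ℝ} (hC : 0 ≤ C) (hf : ∀ᵐ x ∂μ, ‖f x‖ ≤ C) : ‖f‖ ≤ C := by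
  simpa [measureUnivNNReal] using Lp.norm_le_of_ae_bound hC hf

theorem exists_measurable_eq_of_mem_iUnion {α β : Type*} [MeasurableSpace α] [MeasurableSpace β]
    [Zero β] {Q : ℕ → Set α} (hQ : ∀ i, MeasurableSet (Q i)) (w : ℕ → β) :
    ∃ u : α → β, Measurable u ∧ (∀ x ∉ ⋃ i, Q i, u x = 0) ∧
      ∀ x ∈ ⋃ i, Q i, ∃ i, x ∈ Q i ∧ u x = w i := by
  classical
  have hfirst : ∀ x, ∃ i, x ∈ Q i ∨ x ∉ ⋃ i, Q i := fun x => by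
    by_cases hx : x ∈ ⋃ i, Q i
    · obtain ⟨i, hi⟩ := Set.mem_iUnion.1 hx
      exact ⟨i, .inl hi⟩
    · exact ⟨0, .inr hx⟩
  -- `Nat.find` picks the first `i` with `x ∈ Q i`; the disjunct `x ∉ ⋃ i, Q i` only makes the
  -- search total.
  refine ⟨fun x => (⋃ i, Q i).indicator (fun _ => w (Nat.find (hfirst x))) x,
    Measurable.find (f := fun i => (⋃ i, Q i).indicator fun _ => w i)
      (p := fun i x => x ∈ Q i ∨ x ∉ ⋃ i, Q i)
      (fun i => measurable_const.indicator (MeasurableSet.iUnion hQ))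
      (fun i => (hQ i).union (MeasurableSet.iUnion hQ).compl) hfirst,
    fun x hx => Set.indicator_of_notMem hx _,
    fun x hx => ⟨_, (Nat.find_spec (hfirst x)).resolve_right (not_not.2 hx),
      Set.indicator_of_mem hx _⟩⟩

section

variable {Ω : Type*} [MeasurableSpace Ω] {P : Measure Ω}
  {X Y : Type*} [NormedAddCommGroup X] [NormedSpace ℝ X] [NormedAddCommGroup Y] [NormedSpace ℝ Y]
  {p q : ℝ≥0∞} [Fact (1 ≤ p)] [Fact (1 ≤ q)]

variable (P) in
def IsPointwiseRepresentation (𝒢 : Lp X p P →L[ℝ] Lp Y q P) (G : Ω → X →L[ℝ] Y) : Prop :=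
  ∀ u : Lp X p P, ∀ᵐ ω ∂P, 𝒢 u ω = G ω (u ω)

namespace IsPointwiseRepresentation

theorem zero : IsPointwiseRepresentation P (0 : Lp X p P →L[ℝ] Lp Y q P) 0 := fun u => by
  filter_upwards [Lp.coeFn_zero Y q P] with ω h
  rw [zero_apply, h]
  rfl

theorem add {𝒢 ℋ : Lp X p P →L[ℝ] Lp Y q P} {G H : Ω → X →L[ℝ] Y}
    (hG : IsPointwiseRepresentation P 𝒢 G) (hH : IsPointwiseRepresentation P ℋ H) :
    IsPointwiseRepresentation P (𝒢 + ℋ) (G + H) := fun u => by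
  filter_upwards [hG u, hH u, Lp.coeFn_add (𝒢 u) (ℋ u)] with ω h₁ h₂ h₃
  rw [add_apply, h₃, Pi.add_apply, h₁, h₂]
  rfl

theorem sub {𝒢 ℋ : Lp X p P →L[ℝ] Lp Y q P} {G H : Ω → X →L[ℝ] Y}
    (hG : IsPointwiseRepresentation P 𝒢 G) (hH : IsPointwiseRepresentation P ℋ H) :
    IsPointwiseRepresentation P (𝒢 - ℋ) (G - H) := fun u => by
  filter_upwards [hG u, hH u, Lp.coeFn_sub (𝒢 u) (ℋ u)] with ω h₁ h₂ h₃
  rw [sub_apply, h₃, Pi.sub_apply, h₁, h₂]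
  rfl

theorem smul (c : ℝ) {𝒢 : Lp X p P →L[ℝ] Lp Y q P} {G : Ω → X →L[ℝ] Y}
    (hG : IsPointwiseRepresentation P 𝒢 G) :
    IsPointwiseRepresentation P (c • 𝒢) (c • G) := fun u => by
  filter_upwards [hG u, Lp.coeFn_smul c (𝒢 u)] with ω h₁ h₂
  rw [smul_apply, h₂, Pi.smul_apply, h₁]
  rfl

theorem exists_rpow_mul_measure_le_opENorm_rpow [IsProbabilityMeasure P]
    [TopologicalSpace.SeparableSpace X] (hq : q ≠ ⊤) {𝒢 : Lp X p P →L[ℝ] Lp Y q P}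
    {G : Ω → X →L[ℝ] Y} (h : IsPointwiseRepresentation P 𝒢 G) {ε : ℝ} (hε : 0 < ε) :
    ∃ A : Set Ω, ENNReal.ofReal ε ^ q.toReal * P A ≤ ‖𝒢‖ₑ ^ q.toReal ∧
      ∀ᵐ ω ∂P, ω ∉ A → ‖G ω‖ ≤ ε := by
  borelize X
  obtain ⟨w, hw_le, hw_opNorm⟩ := exists_seq_norm_le_one_opNorm_le (X := X) (Y := Y)
  set g : ℕ → Ω → Y := fun i => 𝒢 (Lp.const p P (w i))
  have hg : ∀ i, ∀ᵐ ω ∂P, g i ω = G ω (w i) := fun i => by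
    filter_upwards [h (Lp.const p P (w i)), Lp.coeFn_const (μ := P) p (w i)] with ω h₁ h₂
    simp only [g, h₁, h₂, Function.const_apply]
  set Q : ℕ → Set Ω := fun i => {ω | ε < ‖g i ω‖}
  have hQ : ∀ i, MeasurableSet (Q i) := fun i =>
    measurableSet_lt measurable_const (Lp.stronglyMeasurable _).norm.measurable
  set A := ⋃ i, Q i
  obtain ⟨u, hu_meas, hu_off, hu_on⟩ := exists_measurable_eq_of_mem_iUnion hQ w
  have hu_le : ∀ ω, ‖u ω‖ ≤ 1 := fun ω => by
    by_cases hω : ω ∈ A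
    · obtain ⟨i, -, hi⟩ := hu_on ω hω
      exact hi ▸ hw_le i
    · simp [hu_off ω hω]
  have hu : MemLp u p P :=
    .of_bound hu_meas.stronglyMeasurable.aestronglyMeasurable 1 (ae_of_all _ hu_le)
  have hU : ‖hu.toLp u‖ₑ ≤ 1 := by
    rw [← ofReal_norm]
    exact ENNReal.ofReal_le_one.2 <| Lp.norm_le_of_ae_bound_of_isProbabilityMeasure zero_le_one
      (hu.coeFn_toLp.mono fun ω hω => hω ▸ hu_le ω)
  have h𝒢U : ∀ᵐ ω ∂P, ω ∈ A → ENNReal.ofReal ε ≤ ‖𝒢 (hu.toLp u) ω‖ₑ := by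
    filter_upwards [h (hu.toLp u), hu.coeFn_toLp, ae_all_iff.2 hg] with ω h₁ h₂ h₃ hω
    obtain ⟨i, hi, hui⟩ := hu_on ω hω
    rw [h₁, h₂, hui, ← h₃ i, ← ofReal_norm]
    exact ENNReal.ofReal_le_ofReal hi.le
  refine ⟨A, ?_, ?_⟩
  · calc ENNReal.ofReal ε ^ q.toReal * P A
        ≤ ENNReal.ofReal ε ^ q.toReal * P {ω | ENNReal.ofReal ε ≤ ‖𝒢 (hu.toLp u) ω‖ₑ} := by
          gcongr 1
          exact measure_mono_ae h𝒢U
      _ ≤ ‖𝒢 (hu.toLp u)‖ₑ ^ q.toReal := by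
          rw [Lp.enorm_def]
          exact mul_meas_ge_le_pow_eLpNorm' P (zero_lt_one.trans_le Fact.out).ne' hq
            (Lp.aestronglyMeasurable _) _
      _ ≤ ‖𝒢‖ₑ ^ q.toReal := by
          gcongr
          exact (𝒢.le_opENorm_of_le hU).trans_eq (mul_one _)
  · filter_upwards [ae_all_iff.2 hg] with ω hg hω
    refine hw_opNorm _ hε.le fun i => ?_
    rw [← hg]
    exact not_lt.1 fun hi => hω (Set.mem_iUnion.2 ⟨i, hi⟩)

theorem exists_measure_le_of_opNorm_le [IsProbabilityMeasure P]
    [TopologicalSpace.SeparableSpace X] (hq : q ≠ ⊤) {𝒢 : Lp X p P →L[ℝ] Lp Y q P}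
    {G : Ω → X →L[ℝ] Y} (h : IsPointwiseRepresentation P 𝒢 G) {ε δ : ℝ} (hε : 0 < ε)
    (hδ₁ : δ ≤ 1) (h𝒢 : ‖𝒢‖ ≤ ε * δ) :
    ∃ A : Set Ω, P A ≤ ENNReal.ofReal δ ∧ ∀ᵐ ω ∂P, ω ∉ A → ‖G ω‖ ≤ ε := by
  obtain ⟨A, hA, hGA⟩ := h.exists_rpow_mul_measure_le_opENorm_rpow hq hε
  refine ⟨A, ?_, hGA⟩
  have hq₁ : 1 ≤ q.toReal := ENNReal.toReal_one ▸ ENNReal.toReal_mono hq Fact.out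
  have hε₀ : ENNReal.ofReal ε ^ q.toReal ≠ 0 := by positivity
  have hε_top : ENNReal.ofReal ε ^ q.toReal ≠ ⊤ := by finiteness
  calc P A ≤ ENNReal.ofReal δ ^ q.toReal := by
        rw [← ENNReal.mul_le_mul_iff_right hε₀ hε_top, ← ENNReal.mul_rpow_of_nonneg _ _
          (by positivity), ← ENNReal.ofReal_mul hε.le]
        refine hA.trans (ENNReal.rpow_le_rpow ?_ (by positivity))
        rw [← ofReal_norm]
        exact ENNReal.ofReal_le_ofReal h𝒢
    _ ≤ ENNReal.ofReal δ := ENNReal.rpow_le_self_of_le_one (ENNReal.ofReal_le_one.2 hδ₁) hq₁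

theorem of_tendsto {𝒢s : ℕ → Lp X p P →L[ℝ] Lp Y q P} {𝒢 : Lp X p P →L[ℝ] Lp Y q P}
    {Gs : ℕ → Ω → X →L[ℝ] Y} {G : Ω → X →L[ℝ] Y}
    (h : ∀ k, IsPointwiseRepresentation P (𝒢s k) (Gs k))
    (h𝒢 : ∀ u, Tendsto (fun k => 𝒢s k u) atTop (𝓝 (𝒢 u)))
    (hG : ∀ᵐ ω ∂P, Tendsto (fun k => Gs k ω) atTop (𝓝 (G ω))) :
    IsPointwiseRepresentation P 𝒢 G := fun u => by
  obtain ⟨φ, hφ, hφ_ae⟩ := (tendstoInMeasure_of_tendsto_Lp (h𝒢 u)).exists_seq_tendsto_ae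
  filter_upwards [hφ_ae, hG, ae_all_iff.2 fun k => h (φ k) u] with ω h₁ h₂ h₃
  refine tendsto_nhds_unique h₁ ?_
  simp only [h₃]
  exact ((continuous_eval_const (u ω)).tendsto (G ω)).comp (h₂.comp hφ.tendsto_atTop)

end IsPointwiseRepresentation

variable (P X Y p q) in
def pointwiselyDefinedSubmodule : Submodule ℝ (Lp X p P →L[ℝ] Lp Y q P) where
  carrier := {𝒢 | PointwiselyDefined P p q 𝒢}
  add_mem' := fun ⟨G, hG⟩ ⟨H, hH⟩ => ⟨G + H, IsPointwiseRepresentation.add hG hH⟩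
  zero_mem' := ⟨0, IsPointwiseRepresentation.zero⟩
  smul_mem' := fun c _ ⟨G, hG⟩ => ⟨c • G, IsPointwiseRepresentation.smul c hG⟩

variable [IsProbabilityMeasure P] [TopologicalSpace.SeparableSpace X] [CompleteSpace Y]

theorem PointwiselyDefined.of_tendsto (hq : q ≠ ⊤) {𝒢s : ℕ → Lp X p P →L[ℝ] Lp Y q P}
    {𝒢 : Lp X p P →L[ℝ] Lp Y q P} (h : ∀ n, PointwiselyDefined P p q (𝒢s n))
    (h𝒢 : Tendsto 𝒢s atTop (𝓝 𝒢)) : PointwiselyDefined P p q 𝒢 := by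
  choose Gs hGs using h
  replace hGs : ∀ n, IsPointwiseRepresentation P (𝒢s n) (Gs n) := hGs
  obtain ⟨φ, hφ, hφ_dist⟩ := extraction_forall_of_eventually fun k =>
    h𝒢.eventually (Metric.ball_mem_nhds 𝒢 (by positivity : (0 : ℝ) < (1 / 4) ^ k / 2))
  have hφ_diff : ∀ k, ‖𝒢s (φ (k + 1)) - 𝒢s (φ k)‖ ≤ (1 / 2) ^ k * (1 / 2) ^ k := fun k => by
    have h₁ := hφ_dist k
    have h₂ := hφ_dist (k + 1)
    have h₄ : (0 : ℝ) ≤ (1 / 4) ^ k := by positivity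
    rw [pow_succ] at h₂
    rw [← dist_eq_norm, ← mul_pow]
    calc dist (𝒢s (φ (k + 1))) (𝒢s (φ k))
        ≤ dist (𝒢s (φ (k + 1))) 𝒢 + dist (𝒢s (φ k)) 𝒢 := dist_triangle_right _ _ _
      _ ≤ (1 / 2 * (1 / 2)) ^ k := by norm_num; linarith
  have hA : ∀ k, ∃ A : Set Ω, P A ≤ ENNReal.ofReal ((1 / 2) ^ k) ∧
      ∀ᵐ ω ∂P, ω ∉ A → dist (Gs (φ k) ω) (Gs (φ (k + 1)) ω) ≤ (1 / 2) ^ k := by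
    intro k
    simpa only [dist_comm (Gs (φ k) _), dist_eq_norm, Pi.sub_apply] using
      ((hGs (φ (k + 1))).sub (hGs (φ k))).exists_measure_le_of_opNorm_le hq (by positivity)
        (pow_le_one₀ (by norm_num) (by norm_num)) (hφ_diff k)
  choose A hA_le hA using hA
  have hA_sum : ∑' k, P (A k) ≠ ⊤ := by
    refine ne_top_of_le_ne_top ?_ (ENNReal.tsum_le_tsum hA_le)
    rw [← ENNReal.ofReal_tsum_of_nonneg (fun k => by positivity) summable_geometric_two]
    exact ENNReal.ofReal_ne_top
  have hcauchy := ae_cauchySeq_of_dist_le_of_tsum_ne_top hA_sum summable_geometric_two hA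
  exact ⟨fun ω => limUnder atTop fun k => Gs (φ k) ω,
    IsPointwiseRepresentation.of_tendsto (fun k => hGs (φ k))
      (fun u => ((continuous_eval_const u).tendsto 𝒢).comp (h𝒢.comp hφ.tendsto_atTop))
      (hcauchy.mono fun ω hω => hω.tendsto_limUnder)⟩

theorem isClosed_pointwiselyDefinedSubmodule (hq : q ≠ ⊤) :
    IsClosed (pointwiselyDefinedSubmodule P X Y p q : Set (Lp X p P →L[ℝ] Lp Y q P)) :=
  IsSeqClosed.isClosed fun _ _ h h𝒢 => PointwiselyDefined.of_tendsto hq h h𝒢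

end

theorem statement6_general {Ω : Type*} [MeasurableSpace Ω] (P : Measure Ω) [IsProbabilityMeasure P]
    {X Y : Type*}
    [NormedAddCommGroup X] [NormedSpace ℝ X]
    [TopologicalSpace.SeparableSpace X]
    [NormedAddCommGroup Y] [NormedSpace ℝ Y] [CompleteSpace Y]
    (p₁ q₁ : ℝ≥0∞) [Fact (1 ≤ p₁)] [Fact (1 ≤ q₁)]
    (hq₁' : q₁ ≠ ⊤) :
    (∃ S : Submodule ℝ (Lp X p₁ P →L[ℝ] Lp Y q₁ P),
      (S : Set (Lp X p₁ P →L[ℝ] Lp Y q₁ P)) =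
        {𝒢 | PointwiselyDefined P p₁ q₁ 𝒢} ∧
      IsClosed (S : Set (Lp X p₁ P →L[ℝ] Lp Y q₁ P))) ∧
    ∀ (𝒢seq : ℕ → (Lp X p₁ P →L[ℝ] Lp Y q₁ P)) (𝒢 : Lp X p₁ P →L[ℝ] Lp Y q₁ P),
      (∀ n, PointwiselyDefined P p₁ q₁ (𝒢seq n)) →
      Tendsto 𝒢seq atTop (𝓝 𝒢) →
      PointwiselyDefined P p₁ q₁ 𝒢 :=
  ⟨⟨pointwiselyDefinedSubmodule P X Y p₁ q₁, rfl, isClosed_pointwiselyDefinedSubmodule hq₁'⟩,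
    fun _ _ h h𝒢 => PointwiselyDefined.of_tendsto hq₁' h h𝒢⟩

/-- The set of pointwisely defined bounded linear operators from
`L^{p₁}(Ω;X)` to `L^{q₁}(Ω;Y)` is a closed linear subspace of the Banach space of
all bounded linear operators; in particular an operator-norm limit of pointwisely
defined operators is pointwisely defined. -/
theorem statement6 {Ω : Type*} [MeasurableSpace Ω] (P : Measure Ω) [IsProbabilityMeasure P]
    {X Y : Type*}
    [NormedAddCommGroup X] [NormedSpace ℝ X] [CompleteSpace X]
    [TopologicalSpace.SeparableSpace X]
    [NormedAddCommGroup Y] [NormedSpace ℝ Y] [CompleteSpace Y]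
    (hYrefl : Function.Surjective (NormedSpace.inclusionInDoubleDual ℝ Y))
    [TopologicalSpace.SeparableSpace (Lp ℝ 1 P)]
    (p₁ q₁ : ℝ≥0∞) [Fact (1 ≤ p₁)] [Fact (1 ≤ q₁)]
    (hp₁ : p₁ ≠ ⊤) (hq₁ : 1 < q₁) (hq₁' : q₁ ≠ ⊤) :
    (∃ S : Submodule ℝ (Lp X p₁ P →L[ℝ] Lp Y q₁ P),
      (S : Set (Lp X p₁ P →L[ℝ] Lp Y q₁ P)) =
        {𝒢 | PointwiselyDefined P p₁ q₁ 𝒢} ∧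
      IsClosed (S : Set (Lp X p₁ P →L[ℝ] Lp Y q₁ P))) ∧
    ∀ (𝒢seq : ℕ → (Lp X p₁ P →L[ℝ] Lp Y q₁ P)) (𝒢 : Lp X p₁ P →L[ℝ] Lp Y q₁ P),
      (∀ n, PointwiselyDefined P p₁ q₁ (𝒢seq n)) →
      Tendsto 𝒢seq atTop (𝓝 𝒢) →
      PointwiselyDefined P p₁ q₁ 𝒢 :=
  statement6_general P p₁ q₁ hq₁'

end
end

section
/- Let H₁ be a complex Hilbert space and U a nonempty subset of H₁. Let T > 0 and let (Ω,𝔉,P) be a complete probability space equipped with a filtration 𝔽 = (𝔉_t)_{t∈[0,T]}. Let F ∈ L²_𝔽(0,T;H₁), i.e. F : [0,T]×Ω → H₁ is jointly measurable, 𝔽-adapted and E∫_0^T ‖F(t)‖_{H₁}² dt < ∞, and let ū : [0,T]×Ω → U be a jointly measurable 𝔽-adapted process. Suppose that for every jointly measurable 𝔽-adapted U-valued process u with u − ū ∈ L²_𝔽(0,T;L²(Ω;H₁)) one has Re E∫_0^T ⟨F(t), u(t) − ū(t)⟩_{H₁} dt ≤ 0. Then for every point u ∈ U, the pointwise inequality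 Re⟨F(t,ω), u − ū(t,ω)⟩_{H₁} ≤ 0 holds for almost every (t,ω) ∈ [0,T]×Ω. -/
open MeasureTheory
open scoped ENNReal

/-! Suppose `Re⟪F, u₀ - ū⟫ > 0` on a non-null set. On `S = {Re⟪F, u₀ - ū⟫ > 0, ‖u₀ - ū‖ ≤ n}`
switch the control from `ū` to `u₀`. Since `S` is defined pointwise from `F` and `ū`, the
switched control is again adapted, and its deviation from `ū` is bounded, hence in `L²`.
Its cost increment is `∫_S Re⟪F, u₀ - ū⟫`, which is `≤ 0` by hypothesis but is the integral of
a positive function over `S`; so every such `S` is null, and letting `n → ∞` gives the claim. -/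

section Switching

variable {ι Ω E : Type*} {S : Set (ι × Ω)} {c : E} {v : ι → Ω → E}

open Classical in
noncomputable def switchOn (S : Set (ι × Ω)) (c : E) (v : ι → Ω → E) : ι → Ω → E :=
  fun t ω => if (t, ω) ∈ S then c else v t ω

theorem stronglyMeasurable_uncurry_switchOn [TopologicalSpace E] [MeasurableSpace ι]
    [MeasurableSpace Ω] (hS : MeasurableSet S) (hv : StronglyMeasurable (Function.uncurry v)) :
    StronglyMeasurable (Function.uncurry (switchOn S c v)) :=
  StronglyMeasurable.ite (p := (· ∈ S)) hS stronglyMeasurable_const hv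

theorem stronglyMeasurable_switchOn [TopologicalSpace E] {m : MeasurableSpace Ω} {t : ι}
    (hS : MeasurableSet {ω | (t, ω) ∈ S}) (hv : StronglyMeasurable (v t)) :
    StronglyMeasurable (switchOn S c v t) :=
  StronglyMeasurable.ite hS stronglyMeasurable_const hv

theorem switchOn_mem {U : Set E} (hc : c ∈ U) (hv : ∀ t ω, v t ω ∈ U) (t : ι) (ω : Ω) :
    switchOn S c v t ω ∈ U := by
  unfold switchOn
  split_ifs
  · exact hc
  · exact hv t ω

theorem switchOn_sub_self [AddGroup E] (t : ι) (ω : Ω) :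
    switchOn S c v t ω - v t ω = S.indicator (fun x => c - v x.1 x.2) (t, ω) := by
  by_cases h : (t, ω) ∈ S <;> simp [switchOn, h]

end Switching

section ImprovementSet

variable {X ι Ω H : Type*} [NormedAddCommGroup H] [InnerProductSpace ℂ H]

def improvementSet (f g : X → H) (c : H) (r : ℝ) : Set X :=
  {x | 0 < (inner ℂ (f x) (c - g x)).re ∧ ‖c - g x‖ ≤ r}

theorem measurableSet_improvementSet {m : MeasurableSpace X} {f g : X → H}
    (hf : StronglyMeasurable f) (hg : StronglyMeasurable g) (c : H) (r : ℝ) :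
    MeasurableSet (improvementSet f g c r) := by
  have hcg : StronglyMeasurable fun x => c - g x := stronglyMeasurable_const.sub hg
  exact (measurableSet_lt measurable_const
    (Complex.measurable_re.comp (hf.inner hcg).measurable)).inter
    (measurableSet_le hcg.norm.measurable measurable_const)

theorem norm_switchOn_improvementSet_sub_le (F v : ι → Ω → H) (c : H) {r : ℝ} (hr : 0 ≤ r)
    (t : ι) (ω : Ω) :
    ‖switchOn (improvementSet (Function.uncurry F) (Function.uncurry v) c r) c v t ω
      - v t ω‖ ≤ r := by
  rw [switchOn_sub_self]
  by_cases h : (t, ω) ∈ improvementSet (Function.uncurry F) (Function.uncurry v) c r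
  · simpa [h] using h.2
  · simpa [h] using hr

end ImprovementSet

section Integrals

variable {α β E : Type*} [MeasurableSpace α] [MeasurableSpace β] [NormedAddCommGroup E]

theorem measure_eq_zero_of_setIntegral_nonpos {μ : Measure α} {f : α → ℝ} {s : Set α}
    (hs : MeasurableSet s) (hpos : ∀ x ∈ s, 0 < f x) (hf : IntegrableOn f s μ)
    (h : ∫ x in s, f x ∂μ ≤ 0) : μ s = 0 := by
  have hsupp : Function.support f ∩ s = s :=
    Set.inter_eq_right.2 fun x hx => (hpos x hx).ne'
  have hnonneg : 0 ≤ᵐ[μ.restrict s] f := ae_restrict_of_forall_mem hs fun x hx => (hpos x hx).le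
  by_contra hμ
  have := (setIntegral_pos_iff_support_of_nonneg_ae hnonneg hf).2
  rw [hsupp] at this
  exact h.not_gt (this (pos_iff_ne_zero.2 hμ))

theorem memLp_uncurry_of_lintegral_lintegral_lt_top {ν : Measure α} {P : Measure β} [SFinite ν]
    [SFinite P] {f : α → β → E} (hf : StronglyMeasurable (Function.uncurry f))
    {p : ℝ≥0∞} (hp0 : p ≠ 0) (hp : p ≠ ∞)
    (hfp : ∫⁻ a, ∫⁻ b, ‖f a b‖ₑ ^ p.toReal ∂P ∂ν < ∞) :
    MemLp (Function.uncurry f) p (ν.prod P) := by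
  refine ⟨hf.aestronglyMeasurable, (eLpNorm_lt_top_iff_lintegral_rpow_enorm_lt_top hp0 hp).2 ?_⟩
  rwa [lintegral_prod _ (hf.enorm.pow_const _).aemeasurable]

theorem lintegral_lintegral_enorm_rpow_lt_top_of_norm_le {ν : Measure α} {P : Measure β}
    [IsFiniteMeasure ν] [IsFiniteMeasure P] {f : α → β → E} {r : ℝ} (hf : ∀ a b, ‖f a b‖ ≤ r)
    {q : ℝ} (hq : 0 ≤ q) : ∫⁻ a, ∫⁻ b, ‖f a b‖ₑ ^ q ∂P ∂ν < ∞ := by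
  calc ∫⁻ a, ∫⁻ b, ‖f a b‖ₑ ^ q ∂P ∂ν ≤ ∫⁻ _, ∫⁻ _, ENNReal.ofReal r ^ q ∂P ∂ν := by
        gcongr with a b
        rw [← ofReal_norm]
        exact ENNReal.ofReal_le_ofReal (hf a b)
    _ < ∞ := by
        simp only [lintegral_const]
        exact ENNReal.mul_lt_top (ENNReal.mul_lt_top
          (ENNReal.rpow_lt_top_of_nonneg hq ENNReal.ofReal_ne_top) (measure_lt_top _ _))
          (measure_lt_top _ _)

end Integrals

theorem measure_improvementSet_eq_zero {ι Ω H : Type*} [MeasurableSpace ι] [MeasurableSpace Ω]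
    [NormedAddCommGroup H] [InnerProductSpace ℂ H] {ν : Measure ι} {P : Measure Ω}
    [SFinite ν] [SFinite P] {F v : ι → Ω → H} (hF : Integrable (Function.uncurry F) (ν.prod P))
    (hFmeas : StronglyMeasurable (Function.uncurry F))
    (hvmeas : StronglyMeasurable (Function.uncurry v)) (c : H) (r : ℝ)
    (hineq : (∫ t, ∫ ω, inner ℂ (F t ω)
      (switchOn (improvementSet (Function.uncurry F) (Function.uncurry v) c r) c v t ω - v t ω)
        ∂P ∂ν).re ≤ 0) :
    ν.prod P (improvementSet (Function.uncurry F) (Function.uncurry v) c r) = 0 := by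
  set S := improvementSet (Function.uncurry F) (Function.uncurry v) c r
  set g : ι × Ω → ℂ := fun x => inner ℂ (F x.1 x.2) (c - v x.1 x.2)
  have hS : MeasurableSet S := measurableSet_improvementSet hFmeas hvmeas c r
  have hg : IntegrableOn g S (ν.prod P) := by
    refine Integrable.mono' (hF.norm.mul_const r).restrict
      (hFmeas.inner (stronglyMeasurable_const.sub hvmeas)).aestronglyMeasurable ?_
    refine ae_restrict_of_forall_mem hS fun x hx => ?_
    exact (norm_inner_le_norm _ _).trans (mul_le_mul_of_nonneg_left hx.2 (norm_nonneg _))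
  have hincrement :
      ∀ t ω, inner ℂ (F t ω) (switchOn S c v t ω - v t ω) = S.indicator g (t, ω) := by
    intro t ω
    rw [switchOn_sub_self]
    by_cases h : (t, ω) ∈ S <;> simp [g, h]
  simp_rw [hincrement] at hineq
  rw [← integral_prod _ (hg.integrable_indicator hS), integral_indicator hS,
    ← RCLike.re_to_complex, ← integral_re hg] at hineq
  exact measure_eq_zero_of_setIntegral_nonpos hS (fun x hx => hx.1) hg.re hineq

theorem statement10_general {Ω : Type*} [mΩ : MeasurableSpace Ω] (P : Measure Ω)
    [IsProbabilityMeasure P]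
    {H₁ : Type*} [NormedAddCommGroup H₁] [InnerProductSpace ℂ H₁]
    (U : Set H₁)
    (T : ℝ) (𝔽 : Filtration ℝ mΩ)
    (F : ℝ → Ω → H₁)
    (hFmeas : StronglyMeasurable (Function.uncurry F))
    (hFad : ∀ t : ℝ, StronglyMeasurable[𝔽 t] (F t))
    (hFint : (∫⁻ t in Set.Icc (0 : ℝ) T, ∫⁻ ω, (‖F t ω‖₊ : ℝ≥0∞) ^ (2 : ℝ) ∂P) < ⊤)
    (ubar : ℝ → Ω → H₁)
    (hubarmeas : StronglyMeasurable (Function.uncurry ubar))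
    (hubarad : ∀ t : ℝ, StronglyMeasurable[𝔽 t] (ubar t))
    (hubarU : ∀ t ω, ubar t ω ∈ U)
    (hopt : ∀ u : ℝ → Ω → H₁,
      StronglyMeasurable (Function.uncurry u) →
      (∀ t : ℝ, StronglyMeasurable[𝔽 t] (u t)) →
      (∀ t ω, u t ω ∈ U) →
      (∫⁻ t in Set.Icc (0 : ℝ) T, ∫⁻ ω, (‖u t ω - ubar t ω‖₊ : ℝ≥0∞) ^ (2 : ℝ) ∂P) < ⊤ →
      (∫ t in Set.Icc (0 : ℝ) T, ∫ ω, (inner ℂ (F t ω) (u t ω - ubar t ω) : ℂ) ∂P).re ≤ 0) :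
    ∀ u₀ ∈ U, ∀ᵐ tω ∂((volume.restrict (Set.Icc (0 : ℝ) T)).prod P),
      (inner ℂ (F tω.1 tω.2) (u₀ - ubar tω.1 tω.2) : ℂ).re ≤ 0 := by
  intro u₀ hu₀
  have hF : Integrable (Function.uncurry F) ((volume.restrict (Set.Icc 0 T)).prod P) :=
    (memLp_uncurry_of_lintegral_lintegral_lt_top hFmeas two_ne_zero ENNReal.ofNat_ne_top
      (by rw [ENNReal.toReal_ofNat]; exact hFint)).integrable one_le_two
  have hnull (n : ℕ) := measure_improvementSet_eq_zero hF hFmeas hubarmeas u₀ n <|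
    hopt _ (stronglyMeasurable_uncurry_switchOn
        (measurableSet_improvementSet hFmeas hubarmeas u₀ n) hubarmeas)
      (fun t => stronglyMeasurable_switchOn
        (measurableSet_improvementSet (hFad t) (hubarad t) u₀ n) (hubarad t))
      (switchOn_mem hu₀ hubarU)
      (lintegral_lintegral_enorm_rpow_lt_top_of_norm_le
        (norm_switchOn_improvementSet_sub_le F ubar u₀ n.cast_nonneg) zero_le_two)
  rw [ae_iff]
  refine measure_mono_null (fun x hx => ?_) (measure_iUnion_null hnull)
  obtain ⟨n, hn⟩ := exists_nat_ge ‖u₀ - ubar x.1 x.2‖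
  exact Set.mem_iUnion.2 ⟨n, not_le.1 hx, hn⟩

/-- From an integral variational inequality to a pointwise one:
if `Re E∫_0^T ⟨F(t), u(t) − ū(t)⟩ dt ≤ 0` for every adapted `U`-valued process `u`
with `u − ū ∈ L²`, then for every `u ∈ U`,
`Re⟨F(t,ω), u − ū(t,ω)⟩ ≤ 0` for a.e. `(t,ω) ∈ [0,T] × Ω`. -/
theorem statement10 {Ω : Type*} [mΩ : MeasurableSpace Ω] (P : Measure Ω)
    [IsProbabilityMeasure P] [P.IsComplete]
    {H₁ : Type*} [NormedAddCommGroup H₁] [InnerProductSpace ℂ H₁] [CompleteSpace H₁]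
    (U : Set H₁) (hU : U.Nonempty)
    (T : ℝ) (hT : 0 < T) (𝔽 : Filtration ℝ mΩ)
    (F : ℝ → Ω → H₁)
    (hFmeas : StronglyMeasurable (Function.uncurry F))
    (hFad : ∀ t : ℝ, StronglyMeasurable[𝔽 t] (F t))
    (hFint : (∫⁻ t in Set.Icc (0 : ℝ) T, ∫⁻ ω, (‖F t ω‖₊ : ℝ≥0∞) ^ (2 : ℝ) ∂P) < ⊤)
    (ubar : ℝ → Ω → H₁)
    (hubarmeas : StronglyMeasurable (Function.uncurry ubar))
    (hubarad : ∀ t : ℝ, StronglyMeasurable[𝔽 t] (ubar t))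
    (hubarU : ∀ t ω, ubar t ω ∈ U)
    (hopt : ∀ u : ℝ → Ω → H₁,
      StronglyMeasurable (Function.uncurry u) →
      (∀ t : ℝ, StronglyMeasurable[𝔽 t] (u t)) →
      (∀ t ω, u t ω ∈ U) →
      (∫⁻ t in Set.Icc (0 : ℝ) T, ∫⁻ ω, (‖u t ω - ubar t ω‖₊ : ℝ≥0∞) ^ (2 : ℝ) ∂P) < ⊤ →
      (∫ t in Set.Icc (0 : ℝ) T, ∫ ω, (inner ℂ (F t ω) (u t ω - ubar t ω) : ℂ) ∂P).re ≤ 0) :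
    ∀ u₀ ∈ U, ∀ᵐ tω ∂((volume.restrict (Set.Icc (0 : ℝ) T)).prod P),
      (inner ℂ (F tω.1 tω.2) (u₀ - ubar tω.1 tω.2) : ℂ).re ≤ 0 :=
  statement10_general (mΩ := mΩ) P U T 𝔽 F hFmeas hFad hFint ubar hubarmeas hubarad hubarU hopt
end

section
/- Let H be a separable Hilbert space, T > 0, and let (Ω,𝔉,P) be a complete probability space equipped with a filtration 𝔽 = (𝔉_t)_{t∈[0,T]}. Let S : ℝ → ℒ(H) be a strongly continuous one-parameter group of bounded linear operators on H (S(0) = I, S(t+s) = S(t)S(s) for all s,t ∈ ℝ, and t ↦ S(t)x is continuous for each x ∈ H). Let y ∈ L^1(Ω,𝔉_T,P;H) and let f be a simple 𝔽-adapted process of the form f(t,ω) = Σ_{j=1}^{L} Σ_{k=1}^{M_j} α_{j,k} χ_{Ω_{j,k}}(ω) χ_{[t_j,t_{j+1})}(t), where L, M_j ∈ ℕ, α_{j,k} ∈ H, 0 = t_1 < t_2 < ⋯ < t_{L+1} = T, Ω_{j,k} ∈ 𝔉_{t_j}, and for each j the sets (Ω_{j,k})_{k=1}^{M_j} form a partition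 of Ω. For t ∈ [0,T] define ξ^t := E( S(T−t)y − ∫_t^T S(s−t) f(s) ds | 𝔉_t ) and X(t) := S(t)ξ^t − ∫_0^t S(s) f(s) ds. Then (X(t))_{t∈[0,T]} is an H-valued (𝔉_t)-martingale: X(t) is integrable and 𝔉_t-measurable for each t, and for all 0 ≤ τ₁ ≤ τ₂ ≤ T, E(X(τ₂) | 𝔉_{τ₁}) = X(τ₁) P-almost surely. -/
/-!
With `Z = S(T) y - ∫_0^T S(s) f(s) ds`, the process satisfies `X(t) = E(Z | 𝔉_t)`, so it is a closed
martingale by the tower property. Indeed `S(t)` is a bounded operator, hence commutes with the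
conditional expectation and with the time integral; the group law turns `S(t) ξ^t` into
`E(S(T) y - ∫_t^T S(s) f(s) ds | 𝔉_t)`, and `∫_0^t S(s) f(s) ds` is `𝔉_t`-measurable because each
piece of `f` that contributes to it starts before `t`.
-/

open MeasureTheory Filter

noncomputable def simpleProcess {ι Ω E : Type*} [Fintype ι] [AddCommMonoid E]
    (a b : ι → ℝ) (O : ι → Set Ω) (c : ι → E) (s : ℝ) (ω : Ω) : E :=
  ∑ i, (Set.Ico (a i) (b i) ×ˢ O i).indicator (fun _ => c i) (s, ω)

section SimpleProcess

variable {Ω ι 𝕜 E F : Type*} [Fintype ι] [NontriviallyNormedField 𝕜]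
  [NormedAddCommGroup E] [NormedSpace 𝕜 E] [NormedAddCommGroup F] [NormedSpace 𝕜 F]
  {a b : ι → ℝ} {O : ι → Set Ω} {c : ι → E} {g : ℝ → E →L[𝕜] F}

open scoped Classical in
theorem clm_simpleProcess_eq_sum (s : ℝ) (ω : Ω) :
    g s (simpleProcess a b O c s ω) =
      ∑ i with ω ∈ O i, (Set.Ico (a i) (b i)).indicator (fun s => g s (c i)) s := by
  rw [simpleProcess, map_sum, Finset.sum_filter]
  refine Finset.sum_congr rfl fun i _ => ?_
  by_cases hs : s ∈ Set.Ico (a i) (b i) <;> by_cases hω : ω ∈ O i <;> simp [hs, hω]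

variable (hg : ∀ x, Continuous fun s => g s x)
include hg

theorem integrableOn_clm_simpleProcess (ω : Ω) (p q : ℝ) :
    IntegrableOn (fun s => g s (simpleProcess a b O c s ω)) (Set.Ioc p q) := by
  simp_rw [clm_simpleProcess_eq_sum]
  exact integrable_finsetSum _ fun i _ => (hg (c i)).integrableOn_Ioc.indicator measurableSet_Ico

variable [NormedSpace ℝ F]

open scoped Classical in
theorem setIntegral_clm_simpleProcess (ω : Ω) (p q : ℝ) :
    ∫ s in Set.Ioc p q, g s (simpleProcess a b O c s ω) =
      ∑ i, (O i).indicator (fun _ => ∫ s in Set.Ioc p q ∩ Set.Ico (a i) (b i), g s (c i)) ω := by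
  simp_rw [clm_simpleProcess_eq_sum]
  rw [integral_finsetSum _ fun i _ =>
    (hg (c i)).integrableOn_Ioc.indicator measurableSet_Ico, Finset.sum_filter]
  refine Finset.sum_congr rfl fun i _ => ?_
  rw [setIntegral_indicator measurableSet_Ico, Set.indicator_apply]

theorem integrable_setIntegral_clm_simpleProcess [MeasurableSpace Ω] {μ : Measure Ω}
    [IsFiniteMeasure μ] (hO : ∀ i, MeasurableSet (O i)) (p q : ℝ) :
    Integrable (fun ω => ∫ s in Set.Ioc p q, g s (simpleProcess a b O c s ω)) μ := by
  simp_rw [setIntegral_clm_simpleProcess hg]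
  exact integrable_finsetSum _ fun i _ => (integrable_const _).indicator (hO i)

theorem stronglyMeasurable_setIntegral_clm_simpleProcess {m : MeasurableSpace Ω}
    (𝔽 : Filtration ℝ m) (hO : ∀ i, MeasurableSet[𝔽 (a i)] (O i)) (p t : ℝ) :
    StronglyMeasurable[𝔽 t] fun ω => ∫ s in Set.Ioc p t, g s (simpleProcess a b O c s ω) := by
  simp_rw [setIntegral_clm_simpleProcess hg]
  refine Finset.stronglyMeasurable_fun_sum _ fun i _ => ?_
  rcases lt_or_ge (a i) t with hat | hta
  · exact stronglyMeasurable_const.indicator (𝔽.mono hat.le _ (hO i))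
  · have hnull : volume (Set.Ioc p t ∩ Set.Ico (a i) (b i)) = 0 :=
      measure_mono_null (fun s hs => le_antisymm hs.1.2 (hta.trans hs.2.1))
        (measure_singleton t)
    simp_rw [setIntegral_measure_zero _ hnull, Set.indicator_zero]
    exact stronglyMeasurable_const

theorem condExp_sub_setIntegral_clm_simpleProcess [CompleteSpace F] {m : MeasurableSpace Ω}
    {μ : Measure Ω} [IsFiniteMeasure μ] (𝔽 : Filtration ℝ m)
    (hO : ∀ i, MeasurableSet[𝔽 (a i)] (O i)) {V : Ω → F} (hV : Integrable V μ)
    {p t q : ℝ} (hpt : p ≤ t) (htq : t ≤ q) :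
    μ[fun ω => V ω - ∫ s in Set.Ioc p q, g s (simpleProcess a b O c s ω) | 𝔽 t] =ᵐ[μ]
      μ[fun ω => V ω - ∫ s in Set.Ioc t q, g s (simpleProcess a b O c s ω) | 𝔽 t] -
        fun ω => ∫ s in Set.Ioc p t, g s (simpleProcess a b O c s ω) := by
  have hOm : ∀ i, MeasurableSet (O i) := fun i => 𝔽.le _ _ (hO i)
  have hsplit : (fun ω => V ω - ∫ s in Set.Ioc p q, g s (simpleProcess a b O c s ω)) =
      (fun ω => V ω - ∫ s in Set.Ioc t q, g s (simpleProcess a b O c s ω)) -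
        fun ω => ∫ s in Set.Ioc p t, g s (simpleProcess a b O c s ω) := by
    funext ω
    rw [← Set.Ioc_union_Ioc_eq_Ioc hpt htq, setIntegral_union (Set.Ioc_disjoint_Ioc_of_le le_rfl)
      measurableSet_Ioc (integrableOn_clm_simpleProcess hg ω p t)
      (integrableOn_clm_simpleProcess hg ω t q), Pi.sub_apply]
    abel
  rw [hsplit]
  refine (condExp_sub (hV.sub (integrable_setIntegral_clm_simpleProcess hg hOm t q))
    (integrable_setIntegral_clm_simpleProcess hg hOm p t) _).trans ?_
  rw [condExp_of_stronglyMeasurable (𝔽.le t)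
    (stronglyMeasurable_setIntegral_clm_simpleProcess hg 𝔽 hO p t)
    (integrable_setIntegral_clm_simpleProcess hg hOm p t)]
  rfl

end SimpleProcess

theorem semigroup_apply_condExp_eq {Ω ι E : Type*} [Fintype ι] {m' : MeasurableSpace Ω}
    [MeasurableSpace Ω] {P : Measure Ω} [IsFiniteMeasure P]
    [NormedAddCommGroup E] [NormedSpace ℝ E] [CompleteSpace E] {S : ℝ → E →L[ℝ] E}
    (hS : ∀ s t x, S (s + t) x = S s (S t x)) (hScont : ∀ x, Continuous fun t => S t x)
    {a b : ι → ℝ} {O : ι → Set Ω} {c : ι → E} (hO : ∀ i, MeasurableSet (O i))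
    {y : Ω → E} (hy : Integrable y P) (t T : ℝ) :
    (fun ω => S t (P[fun ω => S (T - t) (y ω) -
        ∫ s in Set.Ioc t T, S (s - t) (simpleProcess a b O c s ω) | m'] ω)) =ᵐ[P]
      P[fun ω => S T (y ω) - ∫ s in Set.Ioc t T, S s (simpleProcess a b O c s ω) | m'] := by
  have hshift : ∀ u x, S t (S (u - t) x) = S u x := fun u x => by rw [← hS, add_sub_cancel]
  have hcont : ∀ x, Continuous fun s => S (s - t) x :=
    fun x => (hScont x).comp (continuous_sub_right t)
  refine ((S t).comp_condExp_comm (((S (T - t)).integrable_comp hy).sub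
    (integrable_setIntegral_clm_simpleProcess hcont hO t T))).trans
      (condExp_congr_ae (Eventually.of_forall fun ω => ?_))
  simp only [Function.comp_apply, Pi.sub_apply, map_sub, hshift,
    ← (S t).integral_comp_comm (integrableOn_clm_simpleProcess hcont ω t T)]

theorem statement11_general {Ω : Type*} [mΩ : MeasurableSpace Ω] (P : Measure Ω)
    [IsProbabilityMeasure P]
    {H : Type*} [NormedAddCommGroup H] [InnerProductSpace ℂ H] [CompleteSpace H]
    (T : ℝ) (𝔽 : Filtration ℝ mΩ)
    (S : ℝ → H →L[ℂ] H)
    (hSgrp : ∀ s t : ℝ, S (s + t) = (S s).comp (S t))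
    (hScont : ∀ x : H, Continuous fun t : ℝ => S t x)
    (y : Ω → H) (hyint : Integrable y P)
    (L : ℕ) (M : Fin L → ℕ)
    (tg : Fin (L + 1) → ℝ)
    (α : (j : Fin L) → Fin (M j) → H)
    (Oset : (j : Fin L) → Fin (M j) → Set Ω)
    (hOmeas : ∀ (j : Fin L) (k : Fin (M j)),
      MeasurableSet[𝔽 (tg j.castSucc)] (Oset j k))
    (f : ℝ → Ω → H)
    (hf : ∀ s ω, f s ω = ∑ j : Fin L, ∑ k : Fin (M j),
      Set.indicator ((Set.Ico (tg j.castSucc) (tg j.succ)) ×ˢ Oset j k)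
        (fun _ => α j k) (s, ω))
    (ξ : ℝ → Ω → H)
    (hξ : ∀ t : ℝ, ξ t =
      P[(fun ω => S (T - t) (y ω) - ∫ s in Set.Ioc t T, S (s - t) (f s ω)) | 𝔽 t])
    (X : ℝ → Ω → H)
    (hX : ∀ (t : ℝ) (ω : Ω), X t ω = S t (ξ t ω) - ∫ s in Set.Ioc (0 : ℝ) t, S s (f s ω)) :
    (∀ t ∈ Set.Icc (0 : ℝ) T, Integrable (X t) P ∧ StronglyMeasurable[𝔽 t] (X t)) ∧
    (∀ τ₁ τ₂ : ℝ, 0 ≤ τ₁ → τ₁ ≤ τ₂ → τ₂ ≤ T → P[X τ₂|𝔽 τ₁] =ᵐ[P] X τ₁) := by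
  set F := simpleProcess (fun i : (j : Fin L) × Fin (M j) => tg i.1.castSucc)
    (fun i => tg i.1.succ) (fun i => Oset i.1 i.2) (fun i => α i.1 i.2)
  obtain rfl : f = F := funext₂ fun s ω => by simp only [hf, F, simpleProcess, Fintype.sum_sigma]
  have hO : ∀ i : (j : Fin L) × Fin (M j), MeasurableSet[𝔽 (tg i.1.castSucc)] (Oset i.1 i.2) :=
    fun i => hOmeas i.1 i.2
  have hS : ∀ s t x, (S (s + t)).restrictScalars ℝ x =
      (S s).restrictScalars ℝ ((S t).restrictScalars ℝ x) := fun s t x => by simp [hSgrp]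
  set Z := fun ω => S T (y ω) - ∫ s in Set.Ioc 0 T, S s (F s ω)
  have hXZ : ∀ t, 0 ≤ t → t ≤ T → X t =ᵐ[P] P[Z|𝔽 t] := by
    intro t h0t htT
    filter_upwards [semigroup_apply_condExp_eq (S := fun t => (S t).restrictScalars ℝ) hS hScont
        (fun i => 𝔽.le _ _ (hO i)) hyint t T,
      condExp_sub_setIntegral_clm_simpleProcess hScont 𝔽 hO ((S T).integrable_comp hyint) h0t htT]
      with ω hshift hsplit
    rw [hX, hξ, hsplit]
    exact congrArg (· - _) hshift
  refine ⟨fun t ht => ⟨?_, ?_⟩, fun τ₁ τ₂ h0 h12 h2 => ?_⟩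
  · exact integrable_condExp.congr (hXZ t ht.1 ht.2).symm
  · rw [funext (hX t), hξ t]
    exact ((S t).continuous.comp_stronglyMeasurable stronglyMeasurable_condExp).sub
      (stronglyMeasurable_setIntegral_clm_simpleProcess hScont 𝔽 hO 0 t)
  · calc P[X τ₂|𝔽 τ₁] =ᵐ[P] P[P[Z|𝔽 τ₂]|𝔽 τ₁] := condExp_congr_ae (hXZ τ₂ (h0.trans h12) h2)
      _ =ᵐ[P] P[Z|𝔽 τ₁] := (martingale_condExp Z 𝔽 P).condExp_ae_eq h12
      _ =ᵐ[P] X τ₁ := (hXZ τ₁ h0 (h12.trans h2)).symm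

/-- Let `S` be a strongly continuous group of bounded operators on a
separable Hilbert space `H`, `y ∈ L¹(Ω,𝔉_T,P;H)` and `f` a simple adapted process.
Setting `ξ^t = E(S(T−t)y − ∫_t^T S(s−t) f(s) ds | 𝔉_t)` and
`X(t) = S(t)ξ^t − ∫_0^t S(s) f(s) ds`, the process `X` is an `H`-valued
`(𝔉_t)`-martingale on `[0,T]`. -/
theorem statement11 {Ω : Type*} [mΩ : MeasurableSpace Ω] (P : Measure Ω)
    [IsProbabilityMeasure P] [P.IsComplete]
    {H : Type*} [NormedAddCommGroup H] [InnerProductSpace ℂ H] [CompleteSpace H]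
    [TopologicalSpace.SeparableSpace H]
    (T : ℝ) (hT : 0 < T) (𝔽 : Filtration ℝ mΩ)
    (S : ℝ → H →L[ℂ] H)
    (hS0 : S 0 = ContinuousLinearMap.id ℂ H)
    (hSgrp : ∀ s t : ℝ, S (s + t) = (S s).comp (S t))
    (hScont : ∀ x : H, Continuous fun t : ℝ => S t x)
    (y : Ω → H) (hymeas : StronglyMeasurable[𝔽 T] y) (hyint : Integrable y P)
    (L : ℕ) (hL : 0 < L) (M : Fin L → ℕ)
    (tg : Fin (L + 1) → ℝ) (htg_mono : StrictMono tg)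
    (htg0 : tg 0 = 0) (htgT : tg (Fin.last L) = T)
    (α : (j : Fin L) → Fin (M j) → H)
    (Oset : (j : Fin L) → Fin (M j) → Set Ω)
    (hOmeas : ∀ (j : Fin L) (k : Fin (M j)),
      MeasurableSet[𝔽 (tg j.castSucc)] (Oset j k))
    (hOdisj : ∀ j : Fin L, Pairwise (Function.onFun Disjoint (Oset j)))
    (hOcover : ∀ j : Fin L, (⋃ k, Oset j k) = Set.univ)
    (f : ℝ → Ω → H)
    (hf : ∀ s ω, f s ω = ∑ j : Fin L, ∑ k : Fin (M j),
      Set.indicator ((Set.Ico (tg j.castSucc) (tg j.succ)) ×ˢ Oset j k)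
        (fun _ => α j k) (s, ω))
    (ξ : ℝ → Ω → H)
    (hξ : ∀ t : ℝ, ξ t =
      P[(fun ω => S (T - t) (y ω) - ∫ s in Set.Ioc t T, S (s - t) (f s ω)) | 𝔽 t])
    (X : ℝ → Ω → H)
    (hX : ∀ (t : ℝ) (ω : Ω), X t ω = S t (ξ t ω) - ∫ s in Set.Ioc (0 : ℝ) t, S s (f s ω)) :
    (∀ t ∈ Set.Icc (0 : ℝ) T, Integrable (X t) P ∧ StronglyMeasurable[𝔽 t] (X t)) ∧
    (∀ τ₁ τ₂ : ℝ, 0 ≤ τ₁ → τ₁ ≤ τ₂ → τ₂ ≤ T → P[X τ₂|𝔽 τ₁] =ᵐ[P] X τ₁) :=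
  statement11_general (mΩ := mΩ) P T 𝔽 S hSgrp hScont y hyint L M tg α Oset hOmeas f hf ξ hξ X hX
end
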